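/- arXiv:2502.03054 — 3 statements merged into one kernel-verified Lean document; each statement's English description precedes it below -/
import Mathlib

section
/- Let (M,g) be a Riemannian manifold on which the weak maximum principle for the Laplacian holds, and suppose u is a C² function on M with finite supremum satisfying Δu ≥ 2λ(1 + u)·u for some constant λ > 0, with u ≥ 0. Then u ≡ 0. -/
/-- The weak maximum principle for an (abstract) Laplace–Beltrami operator `Δ` on a
Riemannian manifold `M`, relative to a class `C2` of C² functions. -/
def WeakMaxPrinciple {M : Type*} (Δ : (M → ℝ) → M → ℝ) (C2 : (M → ℝ) → Prop) : Prop :=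
  ∀ u : M → ℝ, C2 u → ∀ ustar : ℝ, IsLUB (Set.range u) ustar →
    ∃ p : ℕ → M, ∀ k : ℕ, 0 < k →
      ustar - 1 / (k : ℝ) < u (p k) ∧ Δ u (p k) < 1 / (k : ℝ)

open Filter

lemma nonpos_of_forall_lt_div_nat {a C : ℝ} (h : ∀ k : ℕ, 0 < k → a < C / k) : a ≤ 0 :=
  ge_of_tendsto (tendsto_const_div_atTop_nhds_zero_nat C)
    (eventually_atTop.2 ⟨1, fun k hk => (h k hk).le⟩)

/-- Along the maximizing sequence, `s - 1 / k < u (p k) < 1 / (c k)` since `c * u ≤ Δ u < 1 / k`. -/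
lemma WeakMaxPrinciple.sup_nonpos_of_mul_le_laplacian {M : Type*} {Δ : (M → ℝ) → M → ℝ}
    {C2 : (M → ℝ) → Prop} (hWMP : WeakMaxPrinciple Δ C2) {u : M → ℝ} (hu : C2 u) {c s : ℝ}
    (hc : 0 < c) (hs : IsLUB (Set.range u) s) (hineq : ∀ p, c * u p ≤ Δ u p) : s ≤ 0 := by
  obtain ⟨p, hp⟩ := hWMP u hu s hs
  refine nonpos_of_forall_lt_div_nat (C := (1 + c) / c) fun k hk => ?_
  obtain ⟨hnear, hlap⟩ := hp k hk
  have hu_small : u (p k) < 1 / k / c := (lt_div_iff₀' hc).2 ((hineq (p k)).trans_lt hlap)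
  calc s < 1 / k + u (p k) := by linarith
    _ < 1 / k + 1 / k / c := by gcongr
    _ = (1 + c) / c / k := by field_simp; ring

/-- On a Riemannian manifold where the weak maximum principle for the
Laplacian holds, if `u` is a nonnegative C² function with finite supremum satisfying
`Δ u ≥ 2 λ (1 + u) u` for some `λ > 0`, then `u ≡ 0`. -/
theorem weakMaxPrinciple_key_step
    {M : Type*} (Δ : (M → ℝ) → M → ℝ) (C2 : (M → ℝ) → Prop)
    (hSC : WeakMaxPrinciple Δ C2)
    (lam : ℝ) (hlam : 0 < lam)
    (u : M → ℝ) (hu : C2 u) (hnonneg : ∀ p, 0 ≤ u p)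
    (hbdd : BddAbove (Set.range u))
    (hineq : ∀ p, 2 * lam * (1 + u p) * u p ≤ Δ u p) :
    ∀ p, u p = 0 := by
  intro p
  have hlub : IsLUB (Set.range u) (sSup (Set.range u)) := isLUB_csSup ⟨u p, p, rfl⟩ hbdd
  have hlin : ∀ q, 2 * lam * u q ≤ Δ u q := fun q =>
    (mul_le_mul_of_nonneg_right
      (le_mul_of_one_le_right (by positivity) (le_add_of_nonneg_right (hnonneg q)))
      (hnonneg q)).trans (hineq q)
  have hsup := hSC.sup_nonpos_of_mul_le_laplacian hu (by positivity) hlub hlin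
  exact le_antisymm ((hlub.1 ⟨p, rfl⟩).trans hsup) (hnonneg p)
end

section
/- A GRW spacetime I ×_f F obeys the Null Convergence Condition (Ric̄(Z,Z) ≥ 0 for all lightlike Z) if and only if Ric^F(X,X) − (n−1) f(t)² (log f)''(t) g_F(X,X) ≥ 0 for all t ∈ I and all vectors X tangent to the fiber F. -/
/-- Abstract data of a Generalized Robertson–Walker spacetime `I ×_f F` with
`n`-dimensional Riemannian fiber `(F, g_F)`: the metric is `-dt² + f(t)² g_F`.  Tangent
vectors at `(t, x)` are pairs `(a, v) ∈ ℝ × TFib x` (i.e. `a ∂_t + v`).  The fiber metric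
and Ricci tensor are recorded through their quadratic forms `gFq x v = g_F(v,v)` and
`RicFq x v = Ric^F(v,v)`, and `RicBar t x Z = Ric̄(Z,Z)` is the quadratic form of the
Ricci tensor of the warped metric, determined by O'Neill's formulas
(`Ric̄(∂_t,∂_t) = -n f″/f`, `Ric̄(∂_t, V) = 0`,
`Ric̄(V,V) = Ric^F(V,V) + (f″/f + (n-1) f′²/f²) f² g_F(V,V)`). -/
structure GRWSpacetime where
  /-- the dimension of the fiber -/
  n : ℕ
  two_le_n : 2 ≤ n
  /-- the base interval -/
  I : Set ℝ
  I_open : IsOpen I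
  /-- the warping function -/
  f : ℝ → ℝ
  f_pos : ∀ t ∈ I, 0 < f t
  f_smooth : ContDiffOn ℝ (⊤ : ℕ∞) f I
  /-- points of the fiber -/
  F : Type
  /-- tangent spaces of the fiber -/
  TFib : F → Type
  /-- quadratic form of the (Riemannian) fiber metric -/
  gFq : (x : F) → TFib x → ℝ
  gFq_nonneg : ∀ x v, 0 ≤ gFq x v
  /-- quadratic form of the fiber Ricci tensor -/
  RicFq : (x : F) → TFib x → ℝ
  /-- quadratic form of the Ricci tensor of the warped product metric -/
  RicBar : (t : ℝ) → (x : F) → ℝ × TFib x → ℝ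
  /-- O'Neill's warped-product Ricci formulas -/
  ricBar_eq : ∀ t ∈ I, ∀ (x : F) (a : ℝ) (v : TFib x),
    RicBar t x (a, v)
      = -(n : ℝ) * (deriv (deriv f) t / f t) * a ^ 2
        + RicFq x v
        + (deriv (deriv f) t / f t + ((n : ℝ) - 1) * (deriv f t) ^ 2 / (f t) ^ 2)
          * (f t) ^ 2 * gFq x v

/-- The Null Convergence Condition: `Ric̄(Z,Z) ≥ 0` for every lightlike tangent vector
`Z = a ∂_t + v`, i.e. whenever `ḡ(Z,Z) = -a² + f(t)² g_F(v,v) = 0`. -/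
def GRWSpacetime.NCC (S : GRWSpacetime) : Prop :=
  ∀ t ∈ S.I, ∀ (x : S.F) (a : ℝ) (v : S.TFib x),
    -a ^ 2 + (S.f t) ^ 2 * S.gFq x v = 0 → 0 ≤ S.RicBar t x (a, v)


private lemma log_deriv2 (f : ℝ → ℝ) (I : Set ℝ) (hI : IsOpen I) (hf : ContDiffOn ℝ (⊤ : ℕ∞) f I)
    (hpos : ∀ t ∈ I, 0 < f t) (t : ℝ) (ht : t ∈ I) :
    deriv (deriv fun s => Real.log (f s)) t
      = deriv (deriv f) t / f t - (deriv f t) ^ 2 / (f t) ^ 2 := by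
  have hd : ContDiffOn ℝ (⊤ : ℕ∞) (deriv f) I := hf.deriv_of_isOpen hI (by simp)
  have hmem : I ∈ nhds t := hI.mem_nhds ht
  have heq : (deriv fun s => Real.log (f s)) =ᶠ[nhds t] fun s => deriv f s / f s := by
    filter_upwards [hmem] with s hs
    have hfs : DifferentiableAt ℝ f s :=
      (hf.contDiffAt (hI.mem_nhds hs)).differentiableAt (by simp)
    exact ((hfs.hasDerivAt).log (hpos s hs).ne').deriv
  rw [heq.deriv_eq]
  have hfd : HasDerivAt f (deriv f t) t :=
    ((hf.contDiffAt hmem).differentiableAt (by simp)).hasDerivAt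
  have hdd : HasDerivAt (deriv f) (deriv (deriv f) t) t :=
    ((hd.contDiffAt hmem).differentiableAt (by simp)).hasDerivAt
  have hne : f t ≠ 0 := (hpos t ht).ne'
  rw [(hdd.fun_div hfd hne).deriv]
  field_simp

private lemma key (S : GRWSpacetime) (t : ℝ) (ht : t ∈ S.I) (x : S.F) (a : ℝ)
    (v : S.TFib x) (ha : a ^ 2 = (S.f t) ^ 2 * S.gFq x v) :
    S.RicBar t x (a, v)
      = S.RicFq x v - ((S.n : ℝ) - 1) * (S.f t) ^ 2
          * deriv (deriv fun s => Real.log (S.f s)) t * S.gFq x v := by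
  rw [S.ricBar_eq t ht x a v, ha,
    log_deriv2 S.f S.I S.I_open S.f_smooth S.f_pos t ht]
  have hne : S.f t ≠ 0 := (S.f_pos t ht).ne'
  field_simp
  ring

/-- A GRW spacetime `I ×_f F` obeys the Null Convergence Condition if
and only if `Ric^F(X,X) - (n-1) f(t)² (log f)″(t) g_F(X,X) ≥ 0` for all `t ∈ I` and all
vectors `X` tangent to the fiber. -/
theorem NCC_iff_fiber_condition (S : GRWSpacetime) :
    S.NCC ↔ ∀ t ∈ S.I, ∀ (x : S.F) (X : S.TFib x),
      0 ≤ S.RicFq x X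
        - ((S.n : ℝ) - 1) * (S.f t) ^ 2
          * deriv (deriv fun s => Real.log (S.f s)) t * S.gFq x X := by
  constructor
  · intro h t ht x X
    set a := S.f t * Real.sqrt (S.gFq x X) with ha
    have hsq : a ^ 2 = (S.f t) ^ 2 * S.gFq x X := by
      rw [ha, mul_pow, Real.sq_sqrt (S.gFq_nonneg x X)]
    have := h t ht x a X (by rw [hsq]; ring)
    rwa [key S t ht x a X hsq] at this
  · intro h t ht x a v hnull
    have hsq : a ^ 2 = (S.f t) ^ 2 * S.gFq x v := by linarith
    rw [key S t ht x a v hsq]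
    exact h t ht x v
end

section
/- Let ψ : M → I × F be a stochastically complete maximal hypersurface in a Lorentzian product spacetime (f ≡ 1) whose fiber's Ricci curvature satisfies Ric^F ≥ β g_F for some β > 0. If the hyperbolic angle of M is bounded, then M is contained in a spacelike slice {t₀} × F. -/
/-- Abstract data of a (connected) maximal spacelike hypersurface `ψ : M → I ×_f F` in a
Generalized Robertson–Walker spacetime `I ×_f F` (metric `-dt² + f(t)² g_F`), recorded at
the scalar level.  `τ` is the height function, `φ ≥ 0` the hyperbolic angle
(`cosh φ = -ḡ(N, ∂_t)`), `lap` the Laplace–Beltrami operator of the induced metric, `C2`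
the class of C² functions on `M`, `gradNormSq`/`hessNormSq` the squared norms of gradient
and Hessian, and the fiber `(F, g_F)` is recorded through the pointwise quadratic forms
`gFq x X = g_F(X,X)` and `RicFq x X = Ric^F(X,X)` on the tangent spaces `TFib x`, with
`NF p` the fiber component `N^F` of the unit normal at `p`.  Maximality (`H ≡ 0`) is
recorded through the two fundamental identities `lap_tau` (equation (12) of the paper) and
`lap_sinhsq` (Lemma 7 of the paper), and the preliminary facts `slice_of_angle_zero`
(a spacelike hypersurface lies in a slice iff `φ ≡ 0`) and `lap_const`. -/
structure GRWMaximalHyp where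
  /-- the hypersurface -/
  M : Type
  M_nonempty : Nonempty M
  /-- dimension of the hypersurface -/
  n : ℕ
  two_le_n : 2 ≤ n
  /-- the interval on which the warping function lives -/
  I : Set ℝ
  I_open : IsOpen I
  /-- the warping function -/
  f : ℝ → ℝ
  f_pos : ∀ t ∈ I, 0 < f t
  f_smooth : ContDiffOn ℝ ⊤ f I
  /-- the height function -/
  τ : M → ℝ
  τ_mem : ∀ p, τ p ∈ I
  /-- the hyperbolic angle -/
  φ : M → ℝ
  φ_nonneg : ∀ p, 0 ≤ φ p
  /-- points of the fiber `F` -/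
  F : Type
  /-- tangent spaces of the fiber -/
  TFib : F → Type
  /-- the quadratic form of the fiber metric, `gFq x X = g_F(X,X)` -/
  gFq : (x : F) → TFib x → ℝ
  gFq_nonneg : ∀ x X, 0 ≤ gFq x X
  /-- the quadratic form of the fiber Ricci tensor, `RicFq x X = Ric^F(X,X)` -/
  RicFq : (x : F) → TFib x → ℝ
  /-- projection of the hypersurface onto the fiber -/
  πF : M → F
  /-- fiber component `N^F` of the unit normal, `N = N^F - ḡ(N,∂_t) ∂_t` -/
  NF : (p : M) → TFib (πF p)
  /-- `ḡ(N^F,N^F) = f(τ)² g_F(N^F,N^F) = sinh² φ` -/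
  NF_normSq : ∀ p, (f (τ p)) ^ 2 * gFq (πF p) (NF p) = Real.sinh (φ p) ^ 2
  /-- the Laplace–Beltrami operator of the induced metric -/
  lap : (M → ℝ) → M → ℝ
  /-- the class of C² functions on `M` -/
  C2 : (M → ℝ) → Prop
  C2_tau : C2 τ
  C2_sinhsq : C2 fun p => Real.sinh (φ p) ^ 2
  lap_const : ∀ (c : ℝ) (p : M), lap (fun _ => c) p = 0
  /-- `|∇u|²` -/
  gradNormSq : (M → ℝ) → M → ℝ
  gradNormSq_nonneg : ∀ u p, 0 ≤ gradNormSq u p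
  /-- `|Hess u|²` -/
  hessNormSq : (M → ℝ) → M → ℝ
  hessNormSq_nonneg : ∀ u p, 0 ≤ hessNormSq u p
  /-- equation (12): `Δτ = -(f′(τ)/f(τ))(n + sinh² φ)` (encodes maximality) -/
  lap_tau : ∀ p, lap τ p
    = -(deriv f (τ p) / f (τ p)) * ((n : ℝ) + Real.sinh (φ p) ^ 2)
  /-- Lemma 7: the Laplacian of `sinh² φ` for a maximal hypersurface -/
  lap_sinhsq : ∀ p, lap (fun q => Real.sinh (φ q) ^ 2) p
    = 2 * Real.cosh (φ p) ^ 2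
        * (RicFq (πF p) (NF p)
          - ((n : ℝ) - 1) * deriv (deriv fun t => Real.log (f t)) (τ p)
            * Real.sinh (φ p) ^ 2)
      + 2 * hessNormSq τ p
      - 2 * deriv (deriv fun t => Real.log (f t)) (τ p)
          * (1 + Real.sinh (φ p) ^ 2) * Real.sinh (φ p) ^ 2
      + 2 * (deriv f (τ p)) ^ 2 / (f (τ p)) ^ 2
          * ((n : ℝ) + Real.sinh (φ p) ^ 2) * Real.sinh (φ p) ^ 2
      + 2 * gradNormSq (fun q => Real.cosh (φ q)) p
  /-- a (connected) spacelike hypersurface with vanishing hyperbolic angle is contained in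
  a spacelike slice -/
  slice_of_angle_zero : (∀ p, φ p = 0) → ∃ t₀ ∈ I, ∀ p, τ p = t₀

/-- Stochastic completeness of the hypersurface, in the form of the weak maximum
principle for the Laplacian. -/
def GRWMaximalHyp.StochasticallyComplete (S : GRWMaximalHyp) : Prop :=
  ∀ u : S.M → ℝ, S.C2 u → ∀ ustar : ℝ, IsLUB (Set.range u) ustar →
    ∃ p : ℕ → S.M, ∀ k : ℕ, 0 < k →
      ustar - 1 / (k : ℝ) < u (p k) ∧ S.lap u (p k) < 1 / (k : ℝ)

/-- The Null Convergence Condition for the GRW spacetime `I ×_f F`, in its equivalent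
form `Ric^F(X,X) ≥ (n-1) f(t)² (log f)″(t) g_F(X,X)`. -/
def GRWMaximalHyp.NCC (S : GRWMaximalHyp) : Prop :=
  ∀ t ∈ S.I, ∀ (x : S.F) (X : S.TFib x),
    ((S.n : ℝ) - 1) * (S.f t) ^ 2 * deriv (deriv fun s => Real.log (S.f s)) t
        * S.gFq x X
      ≤ S.RicFq x X

/-!
For a product spacetime (`f ≡ 1`) all warped terms in the formula for `Δ sinh² φ` vanish, and
since `cosh² φ = 1 + sinh² φ` and `g_F(N^F, N^F) = sinh² φ`, the Ricci bound gives
`Δ sinh² φ ≥ 2β (1 + sinh² φ) sinh² φ ≥ 2β sinh² φ`. A bounded hyperbolic angle makes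
`sinh² φ` bounded, and the weak maximum principle at its supremum `u*` gives `2β u* ≤ 0`.
Hence `φ ≡ 0`, and the hypersurface lies in a slice.
-/

open Real

namespace GRWMaximalHyp

variable (S : GRWMaximalHyp)

theorem StochasticallyComplete.lub_nonpos {S : GRWMaximalHyp} (hSC : S.StochasticallyComplete)
    {u : S.M → ℝ} (hu : S.C2 u) {c : ℝ} (hc : 0 < c) (hlap : ∀ p, c * u p ≤ S.lap u p)
    {ustar : ℝ} (hlub : IsLUB (Set.range u) ustar) : ustar ≤ 0 := by
  obtain ⟨p, hp⟩ := hSC u hu ustar hlub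
  have hbound : ∀ k : ℕ, 0 < k → c * ustar < (c + 1) * (1 / (k : ℝ)) := fun k hk => by
    obtain ⟨hu_near, hlap_small⟩ := hp k hk
    nlinarith [hlap (p k)]
  by_contra! hpos
  obtain ⟨k, hk⟩ := exists_nat_one_div_lt (div_pos (mul_pos hc hpos) (by linarith : 0 < c + 1))
  have := hbound (k + 1) k.succ_pos
  rw [lt_div_iff₀ (by linarith)] at hk
  push_cast at this
  linarith

theorem mul_sinh_sq_le_lap_sinh_sq_of_product (hprod : ∀ t, S.f t = 1) {β : ℝ}
    (hRic : ∀ (x : S.F) (X : S.TFib x), β * S.gFq x X ≤ S.RicFq x X) (p : S.M) :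
    2 * β * (1 + sinh (S.φ p) ^ 2) * sinh (S.φ p) ^ 2
      ≤ S.lap (fun q => sinh (S.φ q) ^ 2) p := by
  have hf : S.f = fun _ => 1 := funext hprod
  have hgF : S.gFq (S.πF p) (S.NF p) = sinh (S.φ p) ^ 2 := by
    simpa [hprod] using S.NF_normSq p
  have hRp := hRic (S.πF p) (S.NF p)
  rw [hgF] at hRp
  have hlap := S.lap_sinhsq p
  simp only [hf, deriv_const', zero_mul, sub_zero, mul_zero, zero_pow two_ne_zero,
    zero_div] at hlap
  rw [hlap, cosh_sq']
  nlinarith [S.hessNormSq_nonneg S.τ p, S.gradNormSq_nonneg (fun q => cosh (S.φ q)) p,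
    mul_le_mul_of_nonneg_left hRp (by positivity : (0 : ℝ) ≤ 1 + sinh (S.φ p) ^ 2)]

theorem sinh_sq_le_of_le {C : ℝ} (hC : ∀ p, S.φ p ≤ C) (p : S.M) :
    sinh (S.φ p) ^ 2 ≤ sinh C ^ 2 :=
  pow_le_pow_left₀ (sinh_nonneg_iff.2 (S.φ_nonneg p)) (sinh_le_sinh.2 (hC p)) 2

end GRWMaximalHyp

/-- (Theorem 13 of the paper.)  A stochastically complete maximal
hypersurface with bounded hyperbolic angle in a Lorentzian product spacetime `I × F`
(`f ≡ 1`) whose fiber satisfies `Ric^F ≥ β g_F` with `β > 0` is contained in a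
spacelike slice `{t₀} × F`. -/
theorem maximal_in_slice_of_product
    (S : GRWMaximalHyp) (hprod : ∀ t, S.f t = 1)
    (hRic : ∃ β > (0 : ℝ), ∀ (x : S.F) (X : S.TFib x), β * S.gFq x X ≤ S.RicFq x X)
    (hSC : S.StochasticallyComplete)
    (hangle : ∃ C : ℝ, ∀ p, S.φ p ≤ C) :
    ∃ t₀ ∈ S.I, ∀ p, S.τ p = t₀ := by
  obtain ⟨β, hβ, hR⟩ := hRic
  obtain ⟨C, hC⟩ := hangle
  obtain ⟨p₀⟩ := S.M_nonempty
  set u : S.M → ℝ := fun p => sinh (S.φ p) ^ 2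
  have hsub : ∀ p, 2 * β * u p ≤ S.lap u p := fun p => by
    refine le_trans ?_ (S.mul_sinh_sq_le_lap_sinh_sq_of_product hprod hR p)
    nlinarith [mul_nonneg hβ.le (pow_nonneg (sq_nonneg (sinh (S.φ p))) 2)]
  obtain ⟨ustar, hlub⟩ := Real.exists_isLUB ⟨u p₀, Set.mem_range_self p₀⟩
    ⟨sinh C ^ 2, Set.forall_mem_range.2 (S.sinh_sq_le_of_le hC)⟩
  have hustar : ustar ≤ 0 := hSC.lub_nonpos S.C2_sinhsq (by positivity) hsub hlub
  refine S.slice_of_angle_zero fun p => ?_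
  have hup : u p ≤ 0 := (hlub.1 (Set.mem_range_self p)).trans hustar
  exact sinh_eq_zero.1 (pow_eq_zero_iff two_ne_zero |>.1 (le_antisymm hup (sq_nonneg _)))
end
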